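/- Let a, c be complex numbers with a ≠ c, let α = (α_i)_{i≥0} and β = (β_j)_{j≥0} be the sequences with α_i = (2^i - 1)a + c and β_j = (2^j - 1)a + c. Then for every positive integer n, det(P_{α,β}(n)) = [c + a(n-1)]·(c - a)^{n-1}. -/

import Mathlib

open Matrix

/-- Entry `P_{i,j}` of the generalized Pascal triangle associated to sequences `α`, `β`:
`P_{i,0} = α i`, `P_{0,j} = β j`, and `P_{i,j} = P_{i-1,j} + P_{i,j-1}` for `i, j ≥ 1`. -/
def pascalEntry {R : Type*} [CommRing R] (α β : ℕ → R) : ℕ → ℕ → R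
  | i, 0 => α i
  | 0, j + 1 => β (j + 1)
  | i + 1, j + 1 => pascalEntry α β i (j + 1) + pascalEntry α β (i + 1) j

/-- The generalized Pascal triangle `P_{α,β}(n)`. -/
def genPascal {R : Type*} [CommRing R] (α β : ℕ → R) (n : ℕ) :
    Matrix (Fin n) (Fin n) R :=
  Matrix.of fun i j => pascalEntry α β (i : ℕ) (j : ℕ)

/-- The Töplitz matrix `T_{α,β}(n)`: `t_{i,j} = α_{i-j}` if `i ≥ j`, else `β_{j-i}`. -/
def toeplitz {R : Type*} [CommRing R] (α β : ℕ → R) (n : ℕ) :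
    Matrix (Fin n) (Fin n) R :=
  Matrix.of fun i j => if (j : ℕ) ≤ (i : ℕ) then α ((i : ℕ) - (j : ℕ)) else β ((j : ℕ) - (i : ℕ))

/-- The unipotent lower triangular matrix `L(n)` with `L_{i,j} = C(i,j)` for `i ≥ j`. -/
def lowerL (R : Type*) [CommRing R] (n : ℕ) : Matrix (Fin n) (Fin n) R :=
  Matrix.of fun i j => if (j : ℕ) ≤ (i : ℕ) then ((i : ℕ).choose (j : ℕ) : R) else 0

/-- The binomial inverse transform `α̂_i = ∑_{k=0}^{i} (-1)^{i+k} C(i,k) α_k`. -/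
def hatSeq {R : Type*} [CommRing R] (α : ℕ → R) (i : ℕ) : R :=
  ∑ k ∈ Finset.range (i + 1), (-1 : R) ^ (i + k) * (i.choose k : R) * α k

/-- The binomial transform `α̌_i = ∑_{k=0}^{i} C(i,k) α_k`. -/
def checkSeq {R : Type*} [CommRing R] (α : ℕ → R) (i : ℕ) : R :=
  ∑ k ∈ Finset.range (i + 1), (i.choose k : R) * α k

/-!
The entries are `P i j = a * 2 ^ (i + j) + (c - a) * (i + j).choose i`. Since the rows of the
Pascal matrix `L` sum to `2 ^ i` and `L * Lᵀ` has entries `(i + j).choose i` (Vandermonde),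
this gives `P = L * (scalar (c - a) + vecMulVec (fun _ => a) 1) * Lᵀ`. As `det L = 1`, it
remains to compute the determinant of a scalar matrix plus a rank-one matrix, which is read off
the characteristic polynomial `X ^ n - (u ⬝ᵥ v) X ^ (n - 1)` of the rank-one matrix `u vᵀ`.
-/

open Finset

theorem Nat.sum_range_choose_mul_choose (i j : ℕ) :
    ∑ k ∈ range (i + 1), i.choose k * j.choose k = (i + j).choose i := by
  rw [Nat.add_choose_eq, ← Nat.sum_antidiagonal_swap, Nat.sum_antidiagonal_eq_sum_range_succ_mk]
  refine sum_congr rfl fun k hk => ?_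
  rw [Prod.swap_prod_mk, Nat.choose_symm (mem_range_succ_iff.mp hk)]

theorem Matrix.det_scalar_add_vecMulVec {n R : Type*} [Fintype n] [DecidableEq n] [Nonempty n]
    [CommRing R] (d : R) (u v : n → R) :
    (scalar n d + vecMulVec u v).det = d ^ (Fintype.card n - 1) * (d + u ⬝ᵥ v) := by
  have h := eval_charpoly (vecMulVec (-u) v) d
  rw [charpoly_vecMulVec, neg_vecMulVec, sub_neg_eq_add] at h
  obtain ⟨m, hm⟩ := Nat.exists_eq_add_of_lt (Fintype.card_pos (α := n))
  rw [← h, hm]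
  simp only [zero_add, pow_succ, neg_dotProduct, add_tsub_cancel_right, neg_smul, sub_neg_eq_add,
    Polynomial.eval_add, Polynomial.eval_mul, Polynomial.eval_pow, Polynomial.eval_X,
    Polynomial.eval_smul, smul_eq_mul]
  ring

section
variable {R : Type*} [CommRing R]

theorem pascalEntry_mul_two_pow_add (x y : R) (i j : ℕ) :
    pascalEntry (fun i => x * 2 ^ i + y) (fun j => x * 2 ^ j + y) i j
      = x * 2 ^ (i + j) + y * ((i + j).choose i : R) := by
  induction i, j using pascalEntry.induct with
  | case1 i => simp [pascalEntry]
  | case2 j => simp [pascalEntry]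
  | case3 i j ih₁ ih₂ =>
    rw [pascalEntry, ih₁, ih₂, show i + 1 + (j + 1) = i + (j + 1) + 1 by omega,
      Nat.choose_succ_succ', show i + (j + 1) = i + 1 + j by omega]
    push_cast
    ring

theorem lowerL_apply {n : ℕ} (i j : Fin n) : lowerL R n i j = ((i : ℕ).choose j : R) := by
  rw [lowerL, of_apply, ite_eq_left_iff, not_le]
  intro h
  rw [Nat.choose_eq_zero_of_lt h, Nat.cast_zero]

theorem det_lowerL (n : ℕ) : (lowerL R n).det = 1 := by
  rw [det_of_isLowerTriangular _ fun i j (h : i < j) => ?_]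
  · simp [lowerL_apply]
  · rw [lowerL_apply, Nat.choose_eq_zero_of_lt h, Nat.cast_zero]

theorem Fin.sum_univ_choose_mul_eq_sum_range {n : ℕ} (i : Fin n) (f : ℕ → R) :
    ∑ k : Fin n, ((i : ℕ).choose k : R) * f k =
      ∑ k ∈ range (i + 1), ((i : ℕ).choose k : R) * f k := by
  rw [Fin.sum_univ_eq_sum_range (fun k => ((i : ℕ).choose k : R) * f k)]
  refine (sum_subset (range_subset_range.2 i.isLt) fun k _ hk => ?_).symm
  rw [Nat.choose_eq_zero_of_lt (by simpa using hk), Nat.cast_zero, zero_mul]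

theorem lowerL_mulVec_one (n : ℕ) : lowerL R n *ᵥ 1 = fun i : Fin n => (2 : R) ^ (i : ℕ) := by
  ext i
  have := Fin.sum_univ_choose_mul_eq_sum_range (R := R) i fun _ => 1
  simp only [mul_one] at this
  simp only [mulVec, dotProduct, lowerL_apply, Pi.one_apply, mul_one]
  rw [this, ← Nat.cast_sum, Nat.sum_range_choose, Nat.cast_pow, Nat.cast_ofNat]

theorem lowerL_mul_transpose (n : ℕ) :
    lowerL R n * (lowerL R n)ᵀ = of fun i j : Fin n => (((i : ℕ) + j).choose i : R) := by
  ext i j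
  rw [mul_apply, of_apply]
  simp only [transpose_apply, lowerL_apply]
  rw [Fin.sum_univ_choose_mul_eq_sum_range i fun k => ((j : ℕ).choose k : R),
    ← Nat.sum_range_choose_mul_choose, Nat.cast_sum]
  simp only [Nat.cast_mul]

theorem genPascal_mul_two_pow_add (x y : R) (n : ℕ) :
    genPascal (fun i => x * 2 ^ i + y) (fun j => x * 2 ^ j + y) n
      = lowerL R n * (scalar (Fin n) y + vecMulVec (fun _ => x) 1) * (lowerL R n)ᵀ := by
  rw [Matrix.mul_add, Matrix.add_mul, mul_vecMulVec, vecMulVec_mul, vecMul_transpose,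
    scalar_apply, ← smul_one_eq_diagonal, Matrix.mul_smul, mul_one, Matrix.smul_mul,
    lowerL_mul_transpose, show (fun _ => x) = x • (1 : Fin n → R) by ext; simp, mulVec_smul,
    lowerL_mulVec_one]
  ext i j
  simp only [genPascal, pascalEntry_mul_two_pow_add, pow_add, of_apply, smul_of, smul_vecMulVec,
    Matrix.add_apply, Pi.smul_apply, smul_eq_mul, Matrix.smul_apply, vecMulVec_apply]
  ring

end

theorem det_genPascal_two_pow_eq_general (a c : ℂ) (n : ℕ) (hn : 0 < n) :
    (genPascal (fun i => ((2 : ℂ) ^ i - 1) * a + c)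
        (fun j => ((2 : ℂ) ^ j - 1) * a + c) n).det =
      (c + a * ((n : ℂ) - 1)) * (c - a) ^ (n - 1) := by
  have : Nonempty (Fin n) := ⟨⟨0, hn⟩⟩
  have hseq : (fun i : ℕ => ((2 : ℂ) ^ i - 1) * a + c) = fun i => a * 2 ^ i + (c - a) := by
    funext i; ring
  rw [hseq, genPascal_mul_two_pow_add, det_mul, det_mul, det_transpose, det_lowerL, one_mul,
    mul_one, det_scalar_add_vecMulVec, Fintype.card_fin]
  simp only [dotProduct, Pi.one_apply, mul_one, sum_const, card_univ, Fintype.card_fin,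
    nsmul_eq_mul]
  ring

/-- for `α_i = (2^i - 1)a + c = β_i` with `a ≠ c`,
`det(P_{α,β}(n)) = (c + a(n-1))(c - a)^{n-1}`. -/
theorem det_genPascal_two_pow_eq (a c : ℂ) (h : a ≠ c) (n : ℕ) (hn : 0 < n) :
    (genPascal (fun i => ((2 : ℂ) ^ i - 1) * a + c)
        (fun j => ((2 : ℂ) ^ j - 1) * a + c) n).det =
      (c + a * ((n : ℂ) - 1)) * (c - a) ^ (n - 1) :=
  det_genPascal_two_pow_eq_general a c n hn
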